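/- arXiv:1903.11010 — 5 statements merged into one kernel-verified Lean document; each statement's English description precedes it below -/
import Mathlib

section
/- If X and Y are independent non-negative random variables, X is regularly varying with index α > 0, and E[Y^α] = ∞, then P(XY > x)/P(X > x) → ∞ as x → ∞. -/
open MeasureTheory Filter Topology ProbabilityTheory
open scoped NNReal ENNReal

/-- Ratio limit for regularly varying tails: `P(X > x/c)/P(X > x) → c^α`. -/
lemma ratio_tendsto {Ω : Type*} [MeasureSpace Ω]
    (X : Ω → ℝ) (α : ℝ) (hα : 0 < α)
    (L : ℝ → ℝ) (hLpos : ∀ x > 0, 0 < L x)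
    (hL : ∀ c > 0, Tendsto (fun x => L (c * x) / L x) atTop (𝓝 1))
    (htail : ∀ x > 0, (ℙ {ω | X ω > x}).toReal = L x / x ^ α)
    (c : ℝ) (hc : 0 < c) :
    Tendsto (fun x => (ℙ {ω | X ω > x / c}).toReal / (ℙ {ω | X ω > x}).toReal)
      atTop (𝓝 (c ^ α)) := by
  have h1 : Tendsto (fun x => L (c⁻¹ * x) / L x * c ^ α) atTop (𝓝 (1 * c ^ α)) :=
    (hL c⁻¹ (by positivity)).mul tendsto_const_nhds
  rw [one_mul] at h1
  refine h1.congr' ?_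
  filter_upwards [eventually_gt_atTop 0] with x hx
  have hxc : 0 < x / c := by positivity
  rw [htail x hx, htail (x / c) hxc]
  have hLx : L x ≠ 0 := (hLpos x hx).ne'
  have hxα : (0:ℝ) < x ^ α := Real.rpow_pos_of_pos hx α
  have hcα : (0:ℝ) < c ^ α := Real.rpow_pos_of_pos hc α
  rw [show c⁻¹ * x = x / c by ring, Real.div_rpow hx.le hc.le]
  field_simp

/-- If `X, Y` are independent non-negative random variables, `X` is regularly
varying with index `α > 0`, and `E[Y^α] = ∞`, then
`P(XY > x)/P(X > x) → ∞` as `x → ∞`. -/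
theorem stmt2 {Ω : Type*} [MeasureSpace Ω] [IsProbabilityMeasure (ℙ : Measure Ω)]
    (X Y : Ω → ℝ) (hXm : Measurable X) (hYm : Measurable Y)
    (hXnn : ∀ ω, 0 ≤ X ω) (hYnn : ∀ ω, 0 ≤ Y ω)
    (hindep : IndepFun X Y ℙ)
    (α : ℝ) (hα : 0 < α)
    (L : ℝ → ℝ) (hLpos : ∀ x > 0, 0 < L x)
    (hL : ∀ c > 0, Tendsto (fun x => L (c * x) / L x) atTop (𝓝 1))
    (htail : ∀ x > 0, (ℙ {ω | X ω > x}).toReal = L x / x ^ α)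
    (hmom : ∫⁻ ω, ENNReal.ofReal (Y ω ^ α) ∂ℙ = ⊤) :
    Tendsto (fun x => (ℙ {ω | X ω * Y ω > x}).toReal /
      (ℙ {ω | X ω > x}).toReal) atTop atTop := by
  rw [tendsto_atTop]
  intro K
  -- pushforward measure of Y
  set ν : Measure ℝ := Measure.map Y ℙ with hνdef
  have hνprob : IsProbabilityMeasure ν := Measure.isProbabilityMeasure_map hYm.aemeasurable
  have hfm : Measurable fun y : ℝ => ENNReal.ofReal (y ^ α) := by fun_prop
  have hν : ∫⁻ y, ENNReal.ofReal (y ^ α) ∂ν = ⊤ := by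
    rw [hνdef, lintegral_map hfm hYm]; exact hmom
  -- extract a simple function with large integral
  have hlt : ENNReal.ofReal (max K 0 + 1) <
      ⨆ (φ : SimpleFunc ℝ ℝ≥0) (_ : ∀ y, ((φ y : ℝ≥0∞)) ≤ ENNReal.ofReal (y ^ α)),
        (φ.map ((↑) : ℝ≥0 → ℝ≥0∞)).lintegral ν := by
    rw [← lintegral_eq_nnreal (fun y => ENNReal.ofReal (y ^ α)) ν, hν]
    exact ENNReal.ofReal_lt_top.trans_le le_top
  rw [lt_iSup_iff] at hlt
  obtain ⟨φ, hlt⟩ := hlt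
  rw [lt_iSup_iff] at hlt
  obtain ⟨hφle, hφgt⟩ := hlt
  -- notation
  set p : ℝ≥0 → ℝ := fun a => (ν (φ ⁻¹' {a})).toReal with hp
  set c : ℝ≥0 → ℝ := fun a => (a : ℝ) ^ (α⁻¹ : ℝ) with hcdef
  have hcpos : ∀ a : ℝ≥0, a ≠ 0 → 0 < c a := fun a ha =>
    Real.rpow_pos_of_pos (by positivity) _
  have hcα : ∀ a : ℝ≥0, (c a) ^ α = (a : ℝ) := fun a =>
    Real.rpow_inv_rpow a.coe_nonneg hα.ne'
  set S : Finset ℝ≥0 := φ.range.filter (· ≠ 0) with hS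
  -- the integral as a real sum
  have hfin : (φ.map ((↑) : ℝ≥0 → ℝ≥0∞)).lintegral ν ≠ ⊤ := by
    rw [SimpleFunc.map_lintegral]
    refine (ENNReal.sum_lt_top.2 fun a _ => ?_).ne
    exact ENNReal.mul_lt_top ENNReal.coe_lt_top ((measure_lt_top ν _))
  have hsum : ((φ.map ((↑) : ℝ≥0 → ℝ≥0∞)).lintegral ν).toReal
      = ∑ a ∈ S, (a : ℝ) * p a := by
    rw [SimpleFunc.map_lintegral, ENNReal.toReal_sum
      (fun a _ => (ENNReal.mul_lt_top ENNReal.coe_lt_top (measure_lt_top ν _)).ne)]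
    rw [show (∑ a ∈ φ.range, (((a : ℝ≥0∞)) * ν (φ ⁻¹' {a})).toReal)
        = ∑ a ∈ φ.range, (a : ℝ) * p a from Finset.sum_congr rfl fun a _ => by
      rw [ENNReal.toReal_mul, ENNReal.coe_toReal], hS]
    exact (Finset.sum_filter_of_ne fun a _ h => by
      rintro rfl; simp [hp] at h).symm
  set T : ℝ := ∑ a ∈ S, (a : ℝ) * p a with hT
  have hTK : K < T := by
    have h2 := (ENNReal.toReal_lt_toReal ENNReal.ofReal_ne_top hfin).2 hφgt
    rw [ENNReal.toReal_ofReal (by positivity), hsum] at h2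
    have := le_max_left K 0
    linarith
  -- the ratio sum tends to T
  have hg : Tendsto (fun x => ∑ a ∈ S,
      (ℙ {ω | X ω > x / c a}).toReal / (ℙ {ω | X ω > x}).toReal * p a)
      atTop (𝓝 T) := by
    rw [hT]
    refine tendsto_finset_sum _ fun a haS => ?_
    have ha0 : a ≠ 0 := (Finset.mem_filter.1 haS).2
    have := (ratio_tendsto X α hα L hLpos hL htail (c a) (hcpos a ha0)).mul_const (p a)
    rwa [hcα a] at this
  have hgev : ∀ᶠ x in atTop, K < ∑ a ∈ S,
      (ℙ {ω | X ω > x / c a}).toReal / (ℙ {ω | X ω > x}).toReal * p a :=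
    hg.eventually (eventually_gt_nhds hTK)
  filter_upwards [hgev, eventually_gt_atTop 0] with x hgx hx
  -- lower bound the numerator measure
  have key : ∑ a ∈ S, (ℙ {ω | X ω > x / c a}).toReal * p a
      ≤ (ℙ {ω | X ω * Y ω > x}).toReal := by
    have hmeas : ∀ a : ℝ≥0, ℙ (X ⁻¹' Set.Ioi (x / c a) ∩ Y ⁻¹' (φ ⁻¹' {a}))
        = ℙ (X ⁻¹' Set.Ioi (x / c a)) * ν (φ ⁻¹' {a}) := by
      intro a
      rw [hindep.measure_inter_preimage_eq_mul _ _ measurableSet_Ioi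
        (φ.measurableSet_preimage {a}),
        hνdef, Measure.map_apply hYm (φ.measurableSet_preimage {a})]
    have hsub : ∀ a ∈ S, X ⁻¹' Set.Ioi (x / c a) ∩ Y ⁻¹' (φ ⁻¹' {a})
        ⊆ {ω | X ω * Y ω > x} := by
      intro a haS ω hω
      have ha0 : a ≠ 0 := (Finset.mem_filter.1 haS).2
      obtain ⟨hX1, hY1⟩ := hω
      have hX1 : x / c a < X ω := hX1
      have hφY : φ (Y ω) = a := hY1
      have hYα : (a : ℝ) ≤ Y ω ^ α := by
        have := hφle (Y ω)
        rw [hφY] at this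
        rwa [show ((a : ℝ≥0) : ℝ≥0∞) = ENNReal.ofReal (a : ℝ) by
          simp [ENNReal.ofReal_coe_nnreal],
          ENNReal.ofReal_le_ofReal_iff (Real.rpow_nonneg (hYnn ω) α)] at this
      have hYc : c a ≤ Y ω := by
        calc c a = ((a : ℝ)) ^ (α⁻¹ : ℝ) := rfl
        _ ≤ (Y ω ^ α) ^ (α⁻¹ : ℝ) :=
            Real.rpow_le_rpow a.coe_nonneg hYα (by positivity)
        _ = Y ω := Real.rpow_rpow_inv (hYnn ω) hα.ne'
      have hca : 0 < c a := hcpos a ha0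
      have hXpos : 0 < X ω := lt_trans (by positivity) hX1
      show x < X ω * Y ω
      calc x = (x / c a) * c a := (div_mul_cancel₀ x hca.ne').symm
      _ < X ω * c a := by exact mul_lt_mul_of_pos_right hX1 hca
      _ ≤ X ω * Y ω := mul_le_mul_of_nonneg_left hYc hXpos.le
    have hdisj : Set.PairwiseDisjoint ↑S
        (fun a : ℝ≥0 => X ⁻¹' Set.Ioi (x / c a) ∩ Y ⁻¹' (φ ⁻¹' {a})) := by
      intro a _ b _ hab
      refine Set.disjoint_left.2 fun ω hωa hωb => hab ?_
      have h1 : φ (Y ω) = a := hωa.2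
      have h2 : φ (Y ω) = b := hωb.2
      rw [← h1, h2]
    have hUnion : ℙ (⋃ a ∈ S, X ⁻¹' Set.Ioi (x / c a) ∩ Y ⁻¹' (φ ⁻¹' {a}))
        = ∑ a ∈ S, ℙ (X ⁻¹' Set.Ioi (x / c a) ∩ Y ⁻¹' (φ ⁻¹' {a})) :=
      measure_biUnion_finset hdisj fun a _ =>
        (hXm measurableSet_Ioi).inter (hYm (φ.measurableSet_preimage {a}))
    have hle : ∑ a ∈ S, ℙ (X ⁻¹' Set.Ioi (x / c a) ∩ Y ⁻¹' (φ ⁻¹' {a}))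
        ≤ ℙ {ω | X ω * Y ω > x} := by
      rw [← hUnion]
      exact measure_mono (Set.iUnion₂_subset hsub)
    have := ENNReal.toReal_mono (measure_ne_top ℙ _) hle
    rw [ENNReal.toReal_sum (fun a _ => measure_ne_top ℙ _)] at this
    refine le_trans (le_of_eq ?_) this
    refine Finset.sum_congr rfl fun a _ => ?_
    rw [hmeas a, ENNReal.toReal_mul]
    rfl
  -- conclude
  have hD : 0 < (ℙ {ω | X ω > x}).toReal := by
    rw [htail x hx]
    have := hLpos x hx
    have := Real.rpow_pos_of_pos hx α
    positivity
  refine le_of_lt (lt_of_lt_of_le hgx ?_)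
  rw [show ∑ a ∈ S, (ℙ {ω | X ω > x / c a}).toReal / (ℙ {ω | X ω > x}).toReal * p a
      = (∑ a ∈ S, (ℙ {ω | X ω > x / c a}).toReal * p a) / (ℙ {ω | X ω > x}).toReal by
    rw [Finset.sum_div]
    exact Finset.sum_congr rfl fun a _ => by ring]
  gcongr
end

section
/- For any M > 0 and independent non-negative random variables X, Y with X regularly varying with index α > 0, the truncated product satisfies lim_{x→∞} P(XY > x, X ≤ M)/P(X > x) = ∫_{[0,M]} y^α dP_Y(y), where P_Y is the law of Y, provided M is a continuity point of the law of Y. -/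
open MeasureTheory Filter Topology ProbabilityTheory

/-- For independent non-negative `X, Y` with `X` regularly varying with index
`α > 0` and `M > 0` a continuity point of the law of `Y`,
`lim_{x→∞} P(XY > x, Y ≤ M)/P(X > x) = ∫_{[0,M]} y^α dP_Y(y)`. -/
theorem stmt4 {Ω : Type*} [MeasureSpace Ω] [IsProbabilityMeasure (ℙ : Measure Ω)]
    (X Y : Ω → ℝ) (hXm : Measurable X) (hYm : Measurable Y)
    (hXnn : ∀ ω, 0 ≤ X ω) (hYnn : ∀ ω, 0 ≤ Y ω)
    (hindep : IndepFun X Y ℙ)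
    (α : ℝ) (hα : 0 < α)
    (L : ℝ → ℝ) (hLpos : ∀ x > 0, 0 < L x)
    (hL : ∀ c > 0, Tendsto (fun x => L (c * x) / L x) atTop (𝓝 1))
    (htail : ∀ x > 0, (ℙ {ω | X ω > x}).toReal = L x / x ^ α)
    (M : ℝ) (hM : 0 < M) (hMcont : ℙ {ω | Y ω = M} = 0) :
    Tendsto (fun x => (ℙ {ω | X ω * Y ω > x ∧ Y ω ≤ M}).toReal /
      (ℙ {ω | X ω > x}).toReal) atTop
      (𝓝 (∫ y in Set.Icc (0 : ℝ) M, y ^ α ∂(Measure.map Y ℙ))) := by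
  set μX := Measure.map X ℙ with hμX
  set μY := Measure.map Y ℙ with hμY
  have hPX : IsProbabilityMeasure μX := Measure.isProbabilityMeasure_map hXm.aemeasurable
  have hPY : IsProbabilityMeasure μY := Measure.isProbabilityMeasure_map hYm.aemeasurable
  have hXneg : μX (Set.Iio 0) = 0 := by
    rw [hμX, Measure.map_apply hXm measurableSet_Iio]
    have : X ⁻¹' Set.Iio 0 = ∅ := by
      ext ω; simp [Set.mem_preimage, not_lt.2 (hXnn ω)]
    rw [this, measure_empty]
  have hYneg : μY (Set.Iio 0) = 0 := by
    rw [hμY, Measure.map_apply hYm measurableSet_Iio]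
    have : Y ⁻¹' Set.Iio 0 = ∅ := by
      ext ω; simp [Set.mem_preimage, not_lt.2 (hYnn ω)]
    rw [this, measure_empty]
  have hnullX : ∀ s : Set ℝ, μX (s ∩ Set.Ici 0) = μX s := by
    intro s
    have : (Set.Ici (0:ℝ))ᶜ = Set.Iio 0 := by ext u; simp
    exact measure_inter_conull (by rw [this]; exact hXneg)
  -- the sliced measure, as a function of y
  set g : ℝ → ℝ → ENNReal := fun x y => μX ({u | u * y > x} ∩ Set.Ici 0) with hg
  have hgmono : ∀ x, Monotone (g x) := by
    intro x y y' hyy'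
    apply measure_mono
    rintro u ⟨hu1, hu2⟩
    exact ⟨lt_of_lt_of_le hu1 (mul_le_mul_of_nonneg_left hyy' hu2), hu2⟩
  have hgmeas : ∀ x, Measurable (g x) := fun x => (hgmono x).measurable
  set c : ℝ → ℝ := fun x => (ℙ {ω | X ω > x}).toReal with hc
  have hcpos : ∀ x > 0, 0 < c x := by
    intro x hx
    rw [hc]; simp only
    rw [htail x hx]
    exact div_pos (hLpos x hx) (Real.rpow_pos_of_pos hx α)
  set F : ℝ → ℝ → ℝ := fun x y => (g x y).toReal / c x with hF
  -- value of F at positive arguments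
  have hFval : ∀ x > 0, ∀ y > 0, F x y = L (x / y) / L x * y ^ α := by
    intro x hx y hy
    have hxy : 0 < x / y := div_pos hx hy
    have h1 : {u : ℝ | u * y > x} = Set.Ioi (x / y) := by
      ext u; simp [Set.mem_Ioi, gt_iff_lt, div_lt_iff₀ hy]
    have hset : {u : ℝ | u * y > x} ∩ Set.Ici 0 = Set.Ioi (x / y) := by
      rw [h1]
      exact Set.inter_eq_left.mpr fun u hu => le_of_lt (lt_trans hxy hu)
    have hmapv : μX (Set.Ioi (x / y)) = ℙ {ω | X ω > x / y} := by
      rw [hμX, Measure.map_apply hXm measurableSet_Ioi]; rfl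
    have hLx : L x ≠ 0 := (hLpos x hx).ne'
    have hxα : (x : ℝ) ^ α ≠ 0 := (Real.rpow_pos_of_pos hx α).ne'
    have hyα : (y : ℝ) ^ α ≠ 0 := (Real.rpow_pos_of_pos hy α).ne'
    rw [hF]; simp only
    rw [hg]; simp only
    rw [hset, hmapv, htail _ hxy, hc]; simp only
    rw [htail x hx, Real.div_rpow hx.le hy.le]
    field_simp
  -- the key identity: for x > 0 the ratio is an integral over [0, M]
  have key : ∀ x > 0, (ℙ {ω | X ω * Y ω > x ∧ Y ω ≤ M}).toReal / c x
      = ∫ y in Set.Icc (0:ℝ) M, F x y ∂μY := by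
    intro x hx
    set S : Set (ℝ × ℝ) := {p : ℝ × ℝ | p.1 * p.2 > x ∧ p.2 ≤ M} with hSdef
    have hS : MeasurableSet S :=
      (measurableSet_lt measurable_const (measurable_fst.mul measurable_snd)).inter
        (measurableSet_le measurable_snd measurable_const)
    have h1 : ℙ {ω | X ω * Y ω > x ∧ Y ω ≤ M} = (μX.prod μY) S := by
      rw [← (indepFun_iff_map_prod_eq_prod_map_map hXm.aemeasurable hYm.aemeasurable).mp hindep,
        Measure.map_apply (hXm.prodMk hYm) hS]
      rfl
    have h2 : (μX.prod μY) S = ∫⁻ y, μX ((fun u => (u, y)) ⁻¹' S) ∂μY :=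
      Measure.prod_apply_symm hS
    have hae0 : ∀ᵐ y ∂μY, 0 ≤ y := by
      rw [ae_iff]
      have : {y : ℝ | ¬ 0 ≤ y} = Set.Iio 0 := by ext y; simp [not_le]
      rw [this]; exact hYneg
    have h3 : ∫⁻ y, μX ((fun u => (u, y)) ⁻¹' S) ∂μY = ∫⁻ y in Set.Icc (0:ℝ) M, g x y ∂μY := by
      rw [← lintegral_indicator measurableSet_Icc]
      apply lintegral_congr_ae
      filter_upwards [hae0] with y hy
      by_cases hyM : y ≤ M
      · have hmem : y ∈ Set.Icc (0:ℝ) M := ⟨hy, hyM⟩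
        rw [Set.indicator_of_mem hmem, hg]; simp only
        rw [hnullX]
        congr 1
        ext u
        simp [hSdef, hyM]
      · rw [Set.indicator_of_notMem (by simp [hyM])]
        have : (fun u => (u, y)) ⁻¹' S = ∅ := by
          ext u; simp [hSdef, hyM]
        rw [this, measure_empty]
    have h4 : (∫⁻ y in Set.Icc (0:ℝ) M, g x y ∂μY).toReal
        = ∫ y in Set.Icc (0:ℝ) M, (g x y).toReal ∂μY :=
      (integral_toReal ((hgmeas x).aemeasurable) (ae_of_all _ fun y => measure_lt_top μX _)).symm
    rw [h1, h2, h3, h4, ← integral_div]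
  -- eventual bound on L(x/M)/L x
  have hLM : Tendsto (fun x => L (x / M) / L x) atTop (𝓝 1) :=
    (hL (1 / M) (by positivity)).congr fun x => by rw [one_div_mul_eq_div]
  have hev2 : ∀ᶠ x in atTop, L (x / M) / L x < 2 := hLM.eventually_lt_const (by norm_num)
  -- pass to the integral form
  apply Tendsto.congr' ?_
    (MeasureTheory.tendsto_integral_filter_of_dominated_convergence
      (μ := μY.restrict (Set.Icc (0:ℝ) M)) (F := fun x y => F x y) (f := fun y => y ^ α)
      (bound := fun _ => 2 * M ^ α) ?_ ?_ ?_ ?_)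
  · filter_upwards [eventually_gt_atTop 0] with x hx
    exact (key x hx).symm
  · -- measurability
    apply Filter.Eventually.of_forall
    intro x
    have hmono : Monotone fun y => (g x y).toReal := fun y y' h =>
      ENNReal.toReal_mono (measure_ne_top μX _) (hgmono x h)
    exact (hmono.measurable.div_const (c x)).aestronglyMeasurable
  · -- domination
    filter_upwards [eventually_gt_atTop 0, hev2] with x hx hx2
    apply ae_restrict_of_forall_mem measurableSet_Icc
    intro y hy
    have hFnn : 0 ≤ F x y := div_nonneg ENNReal.toReal_nonneg (hcpos x hx).le
    rw [Real.norm_eq_abs, abs_of_nonneg hFnn]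
    have h5 : F x y ≤ F x M := by
      apply div_le_div_of_nonneg_right ?_ (hcpos x hx).le
      exact ENNReal.toReal_mono (measure_ne_top μX _) (hgmono x hy.2)
    calc F x y ≤ F x M := h5
      _ = L (x / M) / L x * M ^ α := hFval x hx M hM
      _ ≤ 2 * M ^ α := by
          apply mul_le_mul_of_nonneg_right hx2.le (Real.rpow_pos_of_pos hM α).le
  · exact integrable_const _
  · -- pointwise limit
    apply ae_restrict_of_forall_mem measurableSet_Icc
    intro y hy
    rcases eq_or_lt_of_le hy.1 with h0 | h0
    · -- y = 0
      have hz : (0:ℝ) ^ α = 0 := Real.zero_rpow hα.ne'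
      have : (fun x => F x y) =ᶠ[atTop] fun _ => 0 := by
        filter_upwards [eventually_gt_atTop 0] with x hx
        have : {u : ℝ | u * y > x} = ∅ := by
          ext u; simp [← h0, not_lt.2 hx.le]
        rw [hF]; simp only
        rw [hg]; simp only
        rw [this, Set.empty_inter, measure_empty]
        simp
      subst h0
      show Tendsto (fun x => F x 0) atTop (𝓝 ((0:ℝ) ^ α))
      rw [hz]
      exact Tendsto.congr' this.symm tendsto_const_nhds
    · -- y > 0
      have hy' : Tendsto (fun x => L (x / y) / L x) atTop (𝓝 1) :=
        (hL (1 / y) (by positivity)).congr fun x => by rw [one_div_mul_eq_div]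
      have hlim : Tendsto (fun x => L (x / y) / L x * y ^ α) atTop (𝓝 (y ^ α)) := by
        have := hy'.mul_const (y ^ α)
        rwa [one_mul] at this
      apply Tendsto.congr' _ hlim
      filter_upwards [eventually_gt_atTop 0] with x hx
      exact (hFval x hx y h0).symm
end

section
/- Let ψ : ℝ^{d₁} × ℝ^{d₂} → ℝ^m be continuous with ψ(s x, t y) = s^a t^b ψ(x,y) for s,t ≥ 0 and a, b > 0, and let μ be a Radon measure on ℝ^{d₁}\{0} that is homogeneous of index −α (μ(tA) = t^{−α} μ(A) for t > 0). For fixed y ∈ ℝ^{d₂} and any continuous f ≥ 0 with compact support in ℝ^m \ {0}, the function g(y) = ∫ f(ψ(x, y)) μ(dx) is finite and satisfies the homogeneity g(r·y) = r^{α b / a} g(y) for all r > 0. -/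
open MeasureTheory Filter Topology Pointwise

/-!
The integrand `x ↦ f (ψ (x, y))` is continuous and bounded, and it vanishes near `x = 0` because
`ψ (0, y) = 0` while `f` vanishes near `0`; so it is supported in `{x | δ ≤ ‖x‖}`, a set of finite
`μ`-measure. Bihomogeneity gives `ψ (x, r • y) = ψ (r ^ (b / a) • x, y)`, and the homogeneity of
`μ` says that its image under `x ↦ t • x` is `t ^ α • μ`; with `t = r ^ (b / a)` this turns the
integral at `r • y` into `r ^ (α b / a)` times the integral at `y`.
-/

theorem integrable_of_bounded_of_support_subset {X E : Type*} [MeasurableSpace X]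
    [NormedAddCommGroup E] {μ : Measure X} {g : X → E} {s : Set X} (hs : μ s ≠ ⊤)
    (hg : AEStronglyMeasurable g μ) {M : ℝ} (hM : ∀ x, ‖g x‖ ≤ M)
    (hsupp : Function.support g ⊆ s) : Integrable g μ :=
  (integrableOn_iff_integrable_of_support_subset hsupp).mp
    (Measure.integrableOn_of_bounded hs hg (.of_forall hM))

theorem exists_pos_le_norm_of_le_norm_apply {E F : Type*} [SeminormedAddCommGroup E]
    [SeminormedAddCommGroup F] {φ : E → F} (hφ : ContinuousAt φ 0) (hφ0 : φ 0 = 0)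
    {ε : ℝ} (hε : 0 < ε) : ∃ δ > 0, ∀ x, ε ≤ ‖φ x‖ → δ ≤ ‖x‖ := by
  obtain ⟨δ, hδ, hball⟩ := Metric.continuousAt_iff.mp hφ ε hε
  refine ⟨δ, hδ, fun x hx => ?_⟩
  by_contra! hlt
  have hsmall := hball (by simpa using hlt)
  simp only [hφ0, dist_zero_right] at hsmall
  linarith

section HomogeneousMeasure

variable {E : Type*} [MeasurableSpace E] [MulAction ℝ E] [MeasurableConstSMul ℝ E]
  {μ : Measure E} {α : ℝ}

theorem map_smul_of_homogeneous
    (hμ : ∀ t : ℝ, 0 < t → ∀ A : Set E, MeasurableSet A →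
      μ (t • A) = ENNReal.ofReal (t ^ (-α)) * μ A)
    {t : ℝ} (ht : 0 < t) : μ.map (t • ·) = ENNReal.ofReal (t ^ α) • μ := by
  ext A hA
  have hpre : (t • ·) ⁻¹' A = t⁻¹ • A := by
    ext x
    rw [Set.mem_preimage, Set.mem_smul_set_iff_inv_smul_mem₀ (inv_ne_zero ht.ne'), inv_inv]
  rw [Measure.map_apply (measurable_const_smul t) hA, hpre, hμ t⁻¹ (inv_pos.mpr ht) A hA,
    Measure.smul_apply, smul_eq_mul, Real.inv_rpow ht.le, Real.rpow_neg ht.le, inv_inv]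

theorem integral_comp_smul_of_homogeneous {G : Type*} [NormedAddCommGroup G] [NormedSpace ℝ G]
    (hμ : ∀ t : ℝ, 0 < t → ∀ A : Set E, MeasurableSet A →
      μ (t • A) = ENNReal.ofReal (t ^ (-α)) * μ A)
    (g : E → G) {t : ℝ} (ht : 0 < t) : ∫ x, g (t • x) ∂μ = t ^ α • ∫ x, g x ∂μ := by
  rw [← (measurableEmbedding_const_smul₀ ht.ne').integral_map, map_smul_of_homogeneous hμ ht,
    integral_smul_measure, ENNReal.toReal_ofReal (Real.rpow_nonneg ht.le α)]

end HomogeneousMeasure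

section Bihomogeneous

variable {E F G : Type*} [AddCommGroup E] [Module ℝ E] [AddCommGroup F] [Module ℝ F]
  [AddCommGroup G] [Module ℝ G] {ψ : E × F → G} {a b : ℝ}

theorem apply_zero_left_of_bihomogeneous (ha : a ≠ 0)
    (hψ : ∀ s t : ℝ, 0 ≤ s → 0 ≤ t → ∀ x y, ψ (s • x, t • y) = (s ^ a * t ^ b) • ψ (x, y))
    (y : F) : ψ (0, y) = 0 := by
  simpa [Real.zero_rpow ha] using hψ 0 1 le_rfl zero_le_one 0 y

theorem apply_smul_right_of_bihomogeneous (ha : a ≠ 0)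
    (hψ : ∀ s t : ℝ, 0 ≤ s → 0 ≤ t → ∀ x y, ψ (s • x, t • y) = (s ^ a * t ^ b) • ψ (x, y))
    {r : ℝ} (hr : 0 ≤ r) (x : E) (y : F) : ψ (x, r • y) = ψ (r ^ (b / a) • x, y) := by
  have hleft := hψ 1 r zero_le_one hr x y
  have hright := hψ (r ^ (b / a)) 1 (Real.rpow_nonneg hr _) zero_le_one x y
  simp only [one_smul, Real.one_rpow, one_mul, mul_one] at hleft hright
  rw [hleft, hright, ← Real.rpow_mul hr, div_mul_cancel₀ _ ha]

end Bihomogeneous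

theorem stmt6_general {d₁ d₂ m : ℕ}
    (ψ : EuclideanSpace ℝ (Fin d₁) × EuclideanSpace ℝ (Fin d₂) → EuclideanSpace ℝ (Fin m))
    (hψ : Continuous ψ)
    (a b α : ℝ) (ha : 0 < a)
    (hhom : ∀ s t : ℝ, 0 ≤ s → 0 ≤ t →
      ∀ (x : EuclideanSpace ℝ (Fin d₁)) (y : EuclideanSpace ℝ (Fin d₂)),
        ψ (s • x, t • y) = (s ^ a * t ^ b) • ψ (x, y))
    (μ : Measure (EuclideanSpace ℝ (Fin d₁)))
    (hRadon : ∀ r : ℝ, 0 < r → μ {x | r ≤ ‖x‖} ≠ ⊤)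
    (hμhom : ∀ t : ℝ, 0 < t → ∀ A : Set (EuclideanSpace ℝ (Fin d₁)), MeasurableSet A →
      μ (t • A) = ENNReal.ofReal (t ^ (-α)) * μ A)
    (f : EuclideanSpace ℝ (Fin m) → ℝ) (hf : Continuous f)
    (c : ℝ) (hc : 0 < c) (hsupp : ∀ z, f z ≠ 0 → c⁻¹ ≤ ‖z‖ ∧ ‖z‖ ≤ c)
    (y : EuclideanSpace ℝ (Fin d₂)) :
    Integrable (fun x => f (ψ (x, y))) μ ∧
    ∀ r : ℝ, 0 < r →
      ∫ x, f (ψ (x, r • y)) ∂μ = r ^ (α * b / a) * ∫ x, f (ψ (x, y)) ∂μ := by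
  have hψy : Continuous fun x => ψ (x, y) := hψ.comp (.prodMk_left y)
  obtain ⟨M, hM⟩ := hf.bounded_above_of_compact_support <|
    .intro (isCompact_closedBall 0 c) fun z hz => by
      by_contra hfz
      exact hz (by simpa using (hsupp z hfz).2)
  obtain ⟨δ, hδ, hδψ⟩ := exists_pos_le_norm_of_le_norm_apply hψy.continuousAt
    (apply_zero_left_of_bihomogeneous ha.ne' hhom y) (inv_pos.mpr hc)
  refine ⟨integrable_of_bounded_of_support_subset (hRadon δ hδ)
    (hf.comp hψy).aestronglyMeasurable (fun x => hM _) fun x hx => hδψ x (hsupp _ hx).1,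
    fun r hr => ?_⟩
  simp_rw [apply_smul_right_of_bihomogeneous ha.ne' hhom hr.le]
  rw [integral_comp_smul_of_homogeneous hμhom (fun x => f (ψ (x, y))) (Real.rpow_pos_of_pos hr _),
    smul_eq_mul, ← Real.rpow_mul hr.le]
  ring_nf

/-- For a continuous `(a,b)`-bihomogeneous `ψ`, a Radon measure `μ` on
`ℝ^{d₁}∖{0}` homogeneous of index `−α`, and `f ≥ 0` continuous with compact
support in an annulus of `ℝ^m∖{0}`, the function
`g(y) = ∫ f(ψ(x,y)) μ(dx)` is finite (the integrand is `μ`-integrable) and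
satisfies `g(r·y) = r^{αb/a} g(y)` for all `r > 0`. -/
theorem stmt6 {d₁ d₂ m : ℕ}
    (ψ : EuclideanSpace ℝ (Fin d₁) × EuclideanSpace ℝ (Fin d₂) → EuclideanSpace ℝ (Fin m))
    (hψ : Continuous ψ)
    (a b α : ℝ) (ha : 0 < a) (hb : 0 < b) (hα : 0 < α)
    (hhom : ∀ s t : ℝ, 0 ≤ s → 0 ≤ t →
      ∀ (x : EuclideanSpace ℝ (Fin d₁)) (y : EuclideanSpace ℝ (Fin d₂)),
        ψ (s • x, t • y) = (s ^ a * t ^ b) • ψ (x, y))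
    (μ : Measure (EuclideanSpace ℝ (Fin d₁)))
    (hzero : μ {0} = 0)
    (hRadon : ∀ r : ℝ, 0 < r → μ {x | r ≤ ‖x‖} ≠ ⊤)
    (hμhom : ∀ t : ℝ, 0 < t → ∀ A : Set (EuclideanSpace ℝ (Fin d₁)), MeasurableSet A →
      μ (t • A) = ENNReal.ofReal (t ^ (-α)) * μ A)
    (f : EuclideanSpace ℝ (Fin m) → ℝ) (hf : Continuous f) (hfnn : ∀ z, 0 ≤ f z)
    (c : ℝ) (hc : 0 < c) (hsupp : ∀ z, f z ≠ 0 → c⁻¹ ≤ ‖z‖ ∧ ‖z‖ ≤ c)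
    (y : EuclideanSpace ℝ (Fin d₂)) :
    Integrable (fun x => f (ψ (x, y))) μ ∧
    ∀ r : ℝ, 0 < r →
      ∫ x, f (ψ (x, r • y)) ∂μ = r ^ (α * b / a) * ∫ x, f (ψ (x, y)) ∂μ :=
  stmt6_general ψ hψ a b α ha hhom μ hRadon hμhom f hf c hc hsupp y
end

section
/- Let ((A_t, B_t)) be iid with A a d×d random matrix, B ∈ ℝ^d, E[log‖A‖] < 0 and E[log₊‖B‖] < ∞. Then the series R = Σ_{k=0}^∞ Π_k B_{k+1}, where Π_k = A₁⋯A_k (Π₀ = Id), converges almost surely, and R satisfies the distributional fixed point equation R =_d A·R' + B where R' is a copy of R independent of (A, B). -/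
/-!
By the strong law of large numbers, `(∑_{j<n} log ‖A_j‖) / n → E[log ‖A‖] < 0` and
`log₊ ‖B_n‖ / n → 0` almost surely, so the terms `‖Π_n B_n‖ ≤ exp (∑_{j<n} log ‖A_j‖ + log₊ ‖B_n‖)`
decay geometrically. Splitting off the first term gives `R = A₀ R̃ + B₀` pointwise, where `R̃` is
the same series built from the shifted sequence `(A_{j+1}, B_{j+1})`. As the sequence is iid, `R̃`
has the law of `R` and is independent of `(A₀, B₀)`, so `A₀ R̃ + B₀` has the law of `A₀ R' + B₀`.
-/

open MeasureTheory Filter Topology ProbabilityTheory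

/-- `d × d` real matrices, modelled as continuous linear endomorphisms of
`ℝ^d` (so that `‖·‖` is the operator norm and `*`/`List.prod` is matrix
multiplication). -/
abbrev Mat (d : ℕ) := EuclideanSpace ℝ (Fin d) →L[ℝ] EuclideanSpace ℝ (Fin d)

/-- The ordered product `Π_k = A₁ ⋯ A_k` (here `0`-indexed: `A 0 * A 1 * ⋯ * A (k-1)`). -/
noncomputable def Pik {Ω : Type*} {d : ℕ} (A : ℕ → Ω → Mat d) (k : ℕ) (ω : Ω) : Mat d :=
  ((List.range k).map (fun j => A j ω)).prod

open Real

section Products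

variable {Ω : Type*} {d : ℕ}

lemma Pik_succ (A : ℕ → Ω → Mat d) (k : ℕ) (ω : Ω) :
    Pik A (k + 1) ω = Pik A k ω * A k ω := by
  simp [Pik, List.range_succ]

lemma Pik_succ' (A : ℕ → Ω → Mat d) (k : ℕ) (ω : Ω) :
    Pik A (k + 1) ω = A 0 ω * Pik (fun j => A (j + 1)) k ω := by
  simp only [Pik, List.range_succ_eq_map, List.map_cons, List.prod_cons, List.map_map]
  rfl

lemma norm_Pik_le (A : ℕ → Ω → Mat d) (k : ℕ) (ω : Ω) :
    ‖Pik A k ω‖ ≤ ∏ j ∈ Finset.range k, ‖A j ω‖ := by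
  induction k with
  | zero => exact ContinuousLinearMap.norm_id_le
  | succ k ih =>
    rw [Pik_succ, Finset.prod_range_succ]
    exact (norm_mul_le _ _).trans (by gcongr)

lemma norm_Pik_apply_le_exp (A : ℕ → Ω → Mat d) (k : ℕ) (ω : Ω)
    (v : EuclideanSpace ℝ (Fin d)) :
    ‖Pik A k ω v‖ ≤ exp (∑ j ∈ Finset.range k, log ‖A j ω‖ + max (log ‖v‖) 0) := by
  calc ‖Pik A k ω v‖ ≤ (∏ j ∈ Finset.range k, ‖A j ω‖) * ‖v‖ :=
        (Pik A k ω).le_of_opNorm_le (norm_Pik_le A k ω) v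
    _ ≤ (∏ j ∈ Finset.range k, exp (log ‖A j ω‖)) * exp (max (log ‖v‖) 0) := by
        gcongr with j
        · exact le_exp_log _
        · exact (le_exp_log _).trans (exp_le_exp.2 (le_max_left _ _))
    _ = _ := by rw [exp_add, exp_sum]

lemma tsum_Pik_apply_eq (A : ℕ → Ω → Mat d) (B : ℕ → Ω → EuclideanSpace ℝ (Fin d)) (ω : Ω)
    (h : Summable fun k => Pik (fun j => A (j + 1)) k ω (B (k + 1) ω)) :
    ∑' k, Pik A k ω (B k ω)
      = A 0 ω (∑' k, Pik (fun j => A (j + 1)) k ω (B (k + 1) ω)) + B 0 ω := by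
  have hsucc : ∀ k, Pik A (k + 1) ω (B (k + 1) ω)
      = A 0 ω (Pik (fun j => A (j + 1)) k ω (B (k + 1) ω)) := fun k => by
    rw [Pik_succ']
    rfl
  have hsum : Summable fun k => Pik A (k + 1) ω (B (k + 1) ω) := by
    simpa only [hsucc] using (A 0 ω).summable h
  rw [tsum_eq_zero_add' (f := fun k => Pik A k ω (B k ω)) hsum, tsum_congr hsucc,
    ← (A 0 ω).map_tsum h, add_comm]
  rfl

lemma measurable_Pik [MeasurableSpace Ω] [MeasurableSpace (Mat d)] [BorelSpace (Mat d)]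
    {A : ℕ → Ω → Mat d} (hA : ∀ j, Measurable (A j)) (k : ℕ) :
    Measurable (Pik A k) := by
  induction k with
  | zero => exact measurable_const
  | succ k ih =>
    rw [show Pik A (k + 1) = Pik A k * A k from funext (Pik_succ A k)]
    exact ih.mul (hA k)

end Products

lemma tendsto_div_of_tendsto_sum_range_div {u : ℕ → ℝ} {c : ℝ}
    (h : Tendsto (fun n : ℕ => (∑ i ∈ Finset.range n, u i) / n) atTop (𝓝 c)) :
    Tendsto (fun n : ℕ => u n / n) atTop (𝓝 0) := by
  have hsucc : Tendsto (fun n : ℕ => (∑ i ∈ Finset.range (n + 1), u i) / (n + 1)) atTop (𝓝 c) := by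
    simpa [Function.comp_def] using h.comp (tendsto_add_atTop_nat 1)
  have hratio : Tendsto (fun n : ℕ => ((n : ℝ) + 1) / n) atTop (𝓝 1) := by
    simpa using (tendsto_natCast_div_add_atTop (1 : ℝ)).inv₀ one_ne_zero
  convert (hsucc.mul hratio).sub h using 1
  · funext n
    rcases Nat.eq_zero_or_pos n with rfl | hn
    · simp
    · rw [Finset.sum_range_succ]
      field_simp
      ring
  · simp

lemma summable_of_norm_le_exp {E : Type*} [NormedAddCommGroup E] [CompleteSpace E]
    {f : ℕ → E} {u : ℕ → ℝ} {c : ℝ} (hf : ∀ n, ‖f n‖ ≤ exp (u n))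
    (hu : Tendsto (fun n : ℕ => u n / n) atTop (𝓝 c)) (hc : c < 0) :
    Summable f := by
  have hr : exp (c / 2) < 1 := exp_lt_one_iff.2 (by linarith)
  refine (summable_geometric_of_lt_one (exp_pos _).le hr).of_norm_bounded_eventually_nat ?_
  filter_upwards [(tendsto_order.1 hu).2 _ (by linarith : c < c / 2), eventually_gt_atTop 0]
    with n hn hn0
  have hu_lt : u n < c / 2 * n := (div_lt_iff₀ (by exact_mod_cast hn0)).1 hn
  calc ‖f n‖ ≤ exp (u n) := hf n
    _ ≤ exp (c / 2 * n) := exp_le_exp.2 hu_lt.le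
    _ = exp (c / 2) ^ n := by rw [mul_comm, exp_nat_mul]

lemma summable_Pik_apply_of_tendsto {Ω : Type*} {d : ℕ} (A : ℕ → Ω → Mat d)
    (B : ℕ → Ω → EuclideanSpace ℝ (Fin d)) (ω : Ω) {c : ℝ}
    (hA : Tendsto (fun n : ℕ => (∑ i ∈ Finset.range n, log ‖A i ω‖) / n) atTop (𝓝 c))
    (hc : c < 0)
    (hB : Tendsto (fun n : ℕ => max (log ‖B n ω‖) 0 / n) atTop (𝓝 0)) :
    Summable fun k => Pik A k ω (B k ω) :=
  summable_of_norm_le_exp (fun k => norm_Pik_apply_le_exp A k ω (B k ω))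
    (by simpa only [add_div, add_zero] using hA.add hB) hc

lemma ae_tendsto_sum_range_comp_div {Ω Ω' β : Type*} [MeasurableSpace Ω] [MeasurableSpace Ω']
    [MeasurableSpace β] {μ : Measure Ω} {ν : Measure Ω'} {Y : ℕ → Ω → β} {Z : Ω' → β}
    (hindep : iIndepFun Y μ) (hident : ∀ j, IdentDistrib (Y j) Z μ ν)
    {g : β → ℝ} (hg : Measurable g) (hint : Integrable (fun x => g (Z x)) ν) :
    ∀ᵐ ω ∂μ, Tendsto (fun n : ℕ => (∑ i ∈ Finset.range n, g (Y i ω)) / n) atTop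
      (𝓝 (∫ x, g (Z x) ∂ν)) := by
  have hgident : ∀ j, IdentDistrib (fun ω => g (Y j ω)) (fun x => g (Z x)) μ ν :=
    fun j => (hident j).comp hg
  have hslln := strong_law_ae_real (fun j ω => g (Y j ω)) ((hgident 0).integrable_iff.2 hint)
    (fun i j hij => (hindep.indepFun hij).comp hg hg) (fun j => (hgident j).trans (hgident 0).symm)
  rwa [(hgident 0).integral_eq] at hslln

lemma ae_summable_Pik_apply {Ω Ω' : Type*} [MeasurableSpace Ω] [MeasurableSpace Ω'] {d : ℕ}
    [MeasurableSpace (Mat d)] [BorelSpace (Mat d)] {μ : Measure Ω} {ν : Measure Ω'}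
    {A : ℕ → Ω → Mat d} {B : ℕ → Ω → EuclideanSpace ℝ (Fin d)}
    {Z : Ω' → Mat d × EuclideanSpace ℝ (Fin d)}
    (hindep : iIndepFun (fun j ω => (A j ω, B j ω)) μ)
    (hident : ∀ j, IdentDistrib (fun ω => (A j ω, B j ω)) Z μ ν)
    (hlogA : Integrable (fun x => log ‖(Z x).1‖) ν) (hlogAneg : ∫ x, log ‖(Z x).1‖ ∂ν < 0)
    (hlogB : Integrable (fun x => max (log ‖(Z x).2‖) 0) ν) :
    ∀ᵐ ω ∂μ, Summable fun k => Pik A k ω (B k ω) := by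
  filter_upwards
    [ae_tendsto_sum_range_comp_div hindep hident (g := fun p => log ‖p.1‖) (by fun_prop) hlogA,
     ae_tendsto_sum_range_comp_div hindep hident (g := fun p => max (log ‖p.2‖) 0) (by fun_prop)
      hlogB] with ω hA hB
  exact summable_Pik_apply_of_tendsto A B ω hA hlogAneg (tendsto_div_of_tendsto_sum_range_div hB)

lemma ProbabilityTheory.iIndepFun.indepFun_head_tail {Ω β : Type*} [MeasurableSpace Ω]
    [mβ : MeasurableSpace β] {μ : Measure Ω} {Y : ℕ → Ω → β} (hY : ∀ j, Measurable (Y j))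
    (h : iIndepFun Y μ) :
    IndepFun (Y 0) (fun ω j => Y (j + 1) ω) μ := by
  have hsplit := indep_iSup_of_disjoint (fun j => (hY j).comap_le)
    (show iIndep (fun j => mβ.comap (Y j)) μ from h) (S := {0}) (T := Set.Ioi 0) (by simp)
  refine indep_of_indep_of_le_left (indep_of_indep_of_le_right hsplit ?_)
    (le_biSup (fun j => mβ.comap (Y j)) rfl)
  simp only [MeasurableSpace.pi, MeasurableSpace.comap_iSup, MeasurableSpace.comap_comp]
  exact iSup_le fun j => le_biSup (fun i => mβ.comap (Y i)) j.succ_pos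

lemma identDistrib_of_ae_eq_of_indepFun {Ω α β γ : Type*} [MeasurableSpace Ω]
    [MeasurableSpace α] [MeasurableSpace β] [MeasurableSpace γ] {μ : Measure Ω}
    [IsFiniteMeasure μ] {X : Ω → γ} {Y : Ω → α} {Z Z' : Ω → β} {φ : α × β → γ}
    (hφ : Measurable φ) (hX : X =ᵐ[μ] fun ω => φ (Y ω, Z ω)) (hY : AEMeasurable Y μ)
    (hZ : IdentDistrib Z Z' μ μ) (hYZ : IndepFun Y Z μ) (hYZ' : IndepFun Y Z' μ) :
    IdentDistrib X (fun ω => φ (Y ω, Z' ω)) μ μ := by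
  have hpair : IdentDistrib (fun ω => (Y ω, Z ω)) (fun ω => (Y ω, Z' ω)) μ μ :=
    (IdentDistrib.refl hY).prodMk hZ hYZ hYZ'
  have hXm : AEMeasurable X μ := (hφ.comp_aemeasurable hpair.aemeasurable_fst).congr hX.symm
  exact (IdentDistrib.of_ae_eq hXm hX).trans (hpair.comp hφ)

section Perpetuity

variable {d : ℕ}

-- Writing the series as a function of the sequence `((Aⱼ, Bⱼ))ⱼ` lets identities in law between
-- sequences pass to the series.
noncomputable def perpetuity (y : ℕ → Mat d × EuclideanSpace ℝ (Fin d)) :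
    EuclideanSpace ℝ (Fin d) :=
  ∑' k, Pik (fun j y => (y j).1) k y (y k).2

lemma measurable_perpetuity [MeasurableSpace (Mat d)] [BorelSpace (Mat d)] :
    Measurable (perpetuity (d := d)) := by
  refine Measurable.tsum fun k => ?_
  have happly : Measurable fun p : Mat d × EuclideanSpace ℝ (Fin d) => p.1 p.2 :=
    isBoundedBilinearMap_apply.continuous.measurable
  exact happly.comp ((measurable_Pik (fun j => (measurable_pi_apply j).fst) k).prodMk
    (measurable_pi_apply k).snd)

end Perpetuity

/-- If `((A_t, B_t))` is iid with `E[log ‖A‖] < 0` and `E[log₊ ‖B‖] < ∞`, then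
the series `R = Σ_k Π_k B_{k+1}` converges a.s., and `R` satisfies the fixed
point equation in law `R =_d A R' + B` for any copy `R'` of `R` independent of
`(A, B)`. -/
theorem stmt14 {Ω : Type*} [MeasureSpace Ω] [IsProbabilityMeasure (ℙ : Measure Ω)]
    {d : ℕ} [MeasurableSpace (Mat d)] [BorelSpace (Mat d)]
    (A : ℕ → Ω → Mat d) (B : ℕ → Ω → EuclideanSpace ℝ (Fin d))
    (hAm : ∀ j, Measurable (A j)) (hBm : ∀ j, Measurable (B j))
    (hiid : iIndepFun (fun j ω => (A j ω, B j ω)) ℙ)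
    (hident : ∀ j, IdentDistrib (fun ω => (A j ω, B j ω)) (fun ω => (A 0 ω, B 0 ω)) ℙ ℙ)
    (hlogA : Integrable (fun ω => Real.log ‖A 0 ω‖) ℙ)
    (hlogAneg : (∫ ω, Real.log ‖A 0 ω‖ ∂ℙ) < 0)
    (hlogB : Integrable (fun ω => max (Real.log ‖B 0 ω‖) 0) ℙ) :
    (∀ᵐ ω ∂ℙ, Summable (fun k => (Pik A k ω) (B k ω))) ∧
    (∀ R' : Ω → EuclideanSpace ℝ (Fin d), Measurable R' →
      IndepFun (fun ω => (A 0 ω, B 0 ω)) R' ℙ →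
      IdentDistrib R' (fun ω => ∑' k, (Pik A k ω) (B k ω)) ℙ ℙ →
      IdentDistrib (fun ω => ∑' k, (Pik A k ω) (B k ω))
        (fun ω => (A 0 ω) (R' ω) + B 0 ω) ℙ ℙ) := by
  have hY : ∀ j, Measurable fun ω => (A j ω, B j ω) := fun j => (hAm j).prodMk (hBm j)
  have hiid_tail : iIndepFun (fun j ω => (A (j + 1) ω, B (j + 1) ω)) ℙ :=
    hiid.precomp (add_left_injective 1)
  refine ⟨ae_summable_Pik_apply hiid hident hlogA hlogAneg hlogB,
    fun R' _ hR'indep hR'law => ?_⟩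
  let Rtail : Ω → EuclideanSpace ℝ (Fin d) :=
    fun ω => perpetuity fun j => (A (j + 1) ω, B (j + 1) ω)
  have hsum_tail : ∀ᵐ ω ∂ℙ, Summable fun k => Pik (fun j => A (j + 1)) k ω (B (k + 1) ω) :=
    ae_summable_Pik_apply hiid_tail (fun j => hident (j + 1)) hlogA hlogAneg hlogB
  have hlaw_tail : IdentDistrib Rtail (fun ω => ∑' k, Pik A k ω (B k ω)) ℙ ℙ :=
    (IdentDistrib.pi (fun j => (hident (j + 1)).trans (hident j).symm) hiid_tail hiid).comp
      measurable_perpetuity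
  have hindep_tail : IndepFun (fun ω => (A 0 ω, B 0 ω)) Rtail ℙ :=
    (hiid.indepFun_head_tail hY).comp measurable_id measurable_perpetuity
  refine identDistrib_of_ae_eq_of_indepFun (φ := fun p => p.1.1 p.2 + p.1.2) (by fun_prop) ?_
    (hY 0).aemeasurable (hlaw_tail.trans hR'law.symm) hindep_tail hR'indep
  filter_upwards [hsum_tail] with ω hω using tsum_Pik_apply_eq A B ω hω
end

section
/- Let f : ℝ^m \ {0} → [0,∞) be continuous with compact support contained in {z : c^{-1} ≤ ‖z‖ ≤ c} and bounded by M. Let μ_t, μ be Radon measures on ℝ^{d}\{0} with μ_t → μ vaguely and μ({x : ‖x‖ > r}) → 0 as r → ∞. Let ψ : ℝ^d × ℝ^{d'} → ℝ^m be continuous and (a,b)-bihomogeneous with a,b > 0. Then for each fixed y ≠ 0, ∫ f(ψ(x,y)) μ_t(dx) → ∫ f(ψ(x,y)) μ(dx) as t → ∞, even though x ↦ f(ψ(x,y)) need not have compact support, provided μ_t({‖x‖ > r}) → μ({‖x‖ > r}) for all large r. -/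
open MeasureTheory Filter Topology

/-!
Multiplying `g = f(ψ(·, y))` by a continuous cutoff `χ_r` which equals `1` on `‖x‖ ≤ r` and
vanishes for `‖x‖ ≥ r + 1` produces a function supported in an annulus, because `ψ(0, y) = 0`
makes `g` vanish near the origin. Vague convergence handles `g χ_r`, and the remainder
`g (1 - χ_r)` has integral at most `M` times the mass of `{‖x‖ > r}`, which is small for `μ`
when `r` is large, and hence also for `μ_t` once `t` is large.
-/

lemma tendsto_of_forall_approx {ι α : Type*} [PseudoMetricSpace α] {l : Filter ι} {u : ι → α}
    {x : α} (h : ∀ ε > 0, ∃ v : ι → α, ∃ y, Tendsto v l (𝓝 y) ∧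
      (∀ᶠ i in l, dist (u i) (v i) ≤ ε) ∧ dist x y ≤ ε) :
    Tendsto u l (𝓝 x) := by
  refine Metric.tendsto_nhds.2 fun ε hε => ?_
  obtain ⟨v, y, hv, huv, hxy⟩ := h (ε / 4) (by positivity)
  filter_upwards [huv, Metric.tendsto_nhds.1 hv (ε / 4) (by positivity)] with i hui hvi
  calc dist (u i) x ≤ dist (u i) (v i) + dist (v i) y + dist y x := dist_triangle4 _ _ _ _
    _ < ε := by rw [dist_comm y x]; linarith

section NormedGroup

variable {E : Type*} [NormedAddCommGroup E]

lemma eventuallyEq_zero_nhds_zero_iff {β : Type*} [Zero β] {g : E → β} :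
    g =ᶠ[𝓝 0] 0 ↔ ∃ δ > 0, ∀ x, g x ≠ 0 → δ ≤ ‖x‖ := by
  simp only [EventuallyEq, Metric.eventually_nhds_iff, dist_zero_right, Pi.zero_apply]
  refine exists_congr fun δ => and_congr_right fun _ => forall_congr' fun x => ?_
  rw [← not_lt, not_imp_not]

def normCutoff (r : ℝ) (x : E) : ℝ := max 0 (min 1 (r + 1 - ‖x‖))

lemma continuous_normCutoff (r : ℝ) : Continuous (normCutoff (E := E) r) := by
  unfold normCutoff; fun_prop

lemma normCutoff_nonneg (r : ℝ) (x : E) : 0 ≤ normCutoff r x := le_max_left _ _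

lemma normCutoff_le_one (r : ℝ) (x : E) : normCutoff r x ≤ 1 :=
  max_le zero_le_one (min_le_left _ _)

lemma normCutoff_eq_one {r : ℝ} {x : E} (hx : ‖x‖ ≤ r) : normCutoff r x = 1 := by
  rw [normCutoff, min_eq_left (by linarith), max_eq_right zero_le_one]

lemma norm_lt_of_normCutoff_ne_zero {r : ℝ} {x : E} (hx : normCutoff r x ≠ 0) : ‖x‖ < r + 1 := by
  by_contra! h
  exact hx (max_eq_left ((min_le_right _ _).trans (by linarith)))

lemma exists_annulus_of_mul_normCutoff {g : E → ℝ} (hg0 : g =ᶠ[𝓝 0] 0) (r : ℝ) :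
    ∃ c > (0 : ℝ), ∀ x, g x * normCutoff r x ≠ 0 → c⁻¹ ≤ ‖x‖ ∧ ‖x‖ ≤ c := by
  obtain ⟨δ, hδ, hgδ⟩ := eventuallyEq_zero_nhds_zero_iff.1 hg0
  refine ⟨max (r + 1) δ⁻¹, lt_max_of_lt_right (inv_pos.2 hδ), fun x hx => ⟨?_, ?_⟩⟩
  · exact (inv_le_of_inv_le₀ hδ (le_max_right _ _)).trans (hgδ x (left_ne_zero_of_mul hx))
  · exact (norm_lt_of_normCutoff_ne_zero (right_ne_zero_of_mul hx)).le.trans (le_max_left _ _)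

lemma norm_sub_mul_normCutoff_le_indicator {g : E → ℝ} (hgnn : ∀ x, 0 ≤ g x) {M : ℝ}
    (hgM : ∀ x, g x ≤ M) (r : ℝ) (x : E) :
    ‖g x - g x * normCutoff r x‖ ≤ {x : E | r < ‖x‖}.indicator (fun _ => M) x := by
  by_cases hx : r < ‖x‖
  · rw [Set.indicator_of_mem (s := {x : E | r < ‖x‖}) hx, ← mul_one_sub,
      Real.norm_of_nonneg (mul_nonneg (hgnn x) (sub_nonneg.2 (normCutoff_le_one r x)))]
    exact (mul_le_of_le_one_right (hgnn x) (sub_le_self _ (normCutoff_nonneg r x))).trans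
      (hgM x)
  · rw [Set.indicator_of_notMem (s := {x : E | r < ‖x‖}) hx, normCutoff_eq_one (not_lt.1 hx),
      mul_one, sub_self, norm_zero]

variable [MeasurableSpace E] [OpensMeasurableSpace E]

/-- The measures that are finite away from the origin (Radon measures on `E ∖ {0}`). -/
def HasFiniteTails (ν : Measure E) : Prop := ∀ r > 0, ν {x | r < ‖x‖} ≠ ⊤

lemma measurableSet_lt_norm (r : ℝ) : MeasurableSet {x : E | r < ‖x‖} :=
  (isOpen_lt continuous_const continuous_norm).measurableSet

lemma HasFiniteTails.integrable {ν : Measure E} (hν : HasFiniteTails ν) {g : E → ℝ}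
    (hg : Continuous g) {M : ℝ} (hgM : ∀ x, ‖g x‖ ≤ M) (hg0 : g =ᶠ[𝓝 0] 0) :
    Integrable g ν := by
  obtain ⟨δ, hδ, hgδ⟩ := eventuallyEq_zero_nhds_zero_iff.1 hg0
  have hsupp : Function.support g ⊆ {x | δ / 2 < ‖x‖} := fun x hx =>
    (half_lt_self hδ).trans_le (hgδ x hx)
  exact (integrableOn_iff_integrable_of_support_subset hsupp).1 <|
    Measure.integrableOn_of_bounded (hν _ (half_pos hδ)) hg.aestronglyMeasurable
      (ae_of_all _ hgM)

lemma dist_integral_integral_mul_normCutoff_le {ν : Measure E} (hν : HasFiniteTails ν)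
    {g : E → ℝ} (hg : Continuous g) (hgnn : ∀ x, 0 ≤ g x) {M : ℝ} (hgM : ∀ x, g x ≤ M)
    (hg0 : g =ᶠ[𝓝 0] 0) {r : ℝ} (hr : 0 < r) :
    dist (∫ x, g x ∂ν) (∫ x, g x * normCutoff r x ∂ν) ≤ M * ν.real {x | r < ‖x‖} := by
  have hgM' (x : E) : ‖g x‖ ≤ M := by rw [Real.norm_of_nonneg (hgnn x)]; exact hgM x
  have hgχM (x : E) : ‖g x * normCutoff r x‖ ≤ M := by
    rw [norm_mul, Real.norm_of_nonneg (normCutoff_nonneg r x)]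
    exact (mul_le_of_le_one_right (norm_nonneg _) (normCutoff_le_one r x)).trans (hgM' x)
  have hgχ0 : (fun x => g x * normCutoff r x) =ᶠ[𝓝 0] 0 :=
    hg0.mono fun x hx => by simp [hx]
  calc dist (∫ x, g x ∂ν) (∫ x, g x * normCutoff r x ∂ν)
      = ‖∫ x, (g x - g x * normCutoff r x) ∂ν‖ := by
        rw [dist_eq_norm, integral_sub (hν.integrable hg hgM' hg0) <|
          hν.integrable (g := fun x => g x * normCutoff r x)
            (hg.mul (continuous_normCutoff r)) hgχM hgχ0]
    _ ≤ ∫ x, {x : E | r < ‖x‖}.indicator (fun _ => M) x ∂ν :=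
        norm_integral_le_of_norm_le ((integrable_indicator_iff (measurableSet_lt_norm r)).2
          (integrableOn_const (hν r hr)))
          (ae_of_all _ (norm_sub_mul_normCutoff_le_indicator hgnn hgM r))
    _ = M * ν.real {x | r < ‖x‖} := by
        rw [integral_indicator_const M (measurableSet_lt_norm r), smul_eq_mul, mul_comm]

theorem tendsto_integral_of_vague_of_tendsto_tail {ι : Type*} {l : Filter ι}
    {νs : ι → Measure E} {ν : Measure E} (hνs : ∀ i, HasFiniteTails (νs i))
    (hν : HasFiniteTails ν)
    (hvague : ∀ g : E → ℝ, Continuous g → (∀ x, 0 ≤ g x) →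
      (∃ c > (0 : ℝ), ∀ x, g x ≠ 0 → c⁻¹ ≤ ‖x‖ ∧ ‖x‖ ≤ c) →
      Tendsto (fun i => ∫ x, g x ∂(νs i)) l (𝓝 (∫ x, g x ∂ν)))
    (htail : Tendsto (fun r => ν.real {x | r < ‖x‖}) atTop (𝓝 0))
    (htails : ∃ r₀, ∀ r > r₀,
      Tendsto (fun i => (νs i).real {x | r < ‖x‖}) l (𝓝 (ν.real {x | r < ‖x‖})))
    {g : E → ℝ} (hg : Continuous g) (hgnn : ∀ x, 0 ≤ g x) {M : ℝ} (hgM : ∀ x, g x ≤ M)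
    (hg0 : g =ᶠ[𝓝 0] 0) :
    Tendsto (fun i => ∫ x, g x ∂(νs i)) l (𝓝 (∫ x, g x ∂ν)) := by
  obtain ⟨r₀, hr₀⟩ := htails
  refine tendsto_of_forall_approx fun ε hε => ?_
  obtain ⟨r, hr₀r, hr, hrε⟩ : ∃ r, r₀ < r ∧ 0 < r ∧ M * ν.real {x | r < ‖x‖} < ε := by
    have hMtail := (htail.const_mul M).eventually (gt_mem_nhds (by rwa [mul_zero]))
    exact ((eventually_gt_atTop r₀).and ((eventually_gt_atTop 0).and hMtail)).exists
  refine ⟨fun i => ∫ x, g x * normCutoff r x ∂(νs i), ∫ x, g x * normCutoff r x ∂ν,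
    hvague _ (hg.mul (continuous_normCutoff r))
      (fun x => mul_nonneg (hgnn x) (normCutoff_nonneg r x))
      (exists_annulus_of_mul_normCutoff hg0 r), ?_,
    (dist_integral_integral_mul_normCutoff_le hν hg hgnn hgM hg0 hr).trans hrε.le⟩
  filter_upwards [((hr₀ r hr₀r).const_mul M).eventually (gt_mem_nhds hrε)] with i hi
  exact (dist_integral_integral_mul_normCutoff_le (hνs i) hg hgnn hgM hg0 hr).trans hi.le

end NormedGroup

theorem stmt16_general {dd d' m : ℕ}
    (f : EuclideanSpace ℝ (Fin m) → ℝ) (hf : Continuous f) (hfnn : ∀ z, 0 ≤ f z)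
    (c M : ℝ) (hc : 0 < c)
    (hsupp : ∀ z, f z ≠ 0 → c⁻¹ ≤ ‖z‖ ∧ ‖z‖ ≤ c) (hfbdd : ∀ z, f z ≤ M)
    (μt : ℝ → Measure (EuclideanSpace ℝ (Fin dd)))
    (μ : Measure (EuclideanSpace ℝ (Fin dd)))
    (hμRadon : ∀ r : ℝ, 0 < r → μ {x | ‖x‖ > r} ≠ ⊤)
    (hμtRadon : ∀ t : ℝ, ∀ r : ℝ, 0 < r → μt t {x | ‖x‖ > r} ≠ ⊤)
    (hvague : ∀ g : EuclideanSpace ℝ (Fin dd) → ℝ, Continuous g → (∀ x, 0 ≤ g x) →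
      (∃ c' > (0:ℝ), ∀ x, g x ≠ 0 → c'⁻¹ ≤ ‖x‖ ∧ ‖x‖ ≤ c') →
      Tendsto (fun t => ∫ x, g x ∂(μt t)) atTop (𝓝 (∫ x, g x ∂μ)))
    (hμtail : Tendsto (fun r : ℝ => (μ {x | ‖x‖ > r}).toReal) atTop (𝓝 0))
    (hμttail : ∃ r₀ : ℝ, ∀ r > r₀,
      Tendsto (fun t => (μt t {x | ‖x‖ > r}).toReal) atTop (𝓝 ((μ {x | ‖x‖ > r}).toReal)))
    (ψ : EuclideanSpace ℝ (Fin dd) × EuclideanSpace ℝ (Fin d') → EuclideanSpace ℝ (Fin m))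
    (hψ : Continuous ψ)
    (a b : ℝ) (ha : 0 < a)
    (hhom : ∀ s t : ℝ, 0 ≤ s → 0 ≤ t →
      ∀ (x : EuclideanSpace ℝ (Fin dd)) (y : EuclideanSpace ℝ (Fin d')),
        ψ (s • x, t • y) = (s ^ a * t ^ b) • ψ (x, y))
    (y : EuclideanSpace ℝ (Fin d')) :
    Tendsto (fun t => ∫ x, f (ψ (x, y)) ∂(μt t)) atTop
      (𝓝 (∫ x, f (ψ (x, y)) ∂μ)) := by
  have hψ0 : ψ (0, y) = 0 := by
    simpa [Real.zero_rpow ha.ne'] using hhom 0 1 le_rfl zero_le_one 0 y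
  have hf0 : f =ᶠ[𝓝 0] 0 :=
    eventuallyEq_zero_nhds_zero_iff.2 ⟨c⁻¹, inv_pos.2 hc, fun z hz => (hsupp z hz).1⟩
  have hψy : Continuous fun x => ψ (x, y) := by fun_prop
  exact tendsto_integral_of_vague_of_tendsto_tail hμtRadon hμRadon hvague hμtail hμttail
    (hf.comp hψy) (fun x => hfnn _) (fun x => hfbdd _) ((hψy.tendsto' 0 0 hψ0).eventually hf0)

/-- Extension of vague convergence to integrands without compact support:
if `μ_t → μ` vaguely on `ℝ^d∖{0}`, `μ({‖x‖ > r}) → 0` as `r → ∞`,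
`μ_t({‖x‖ > r}) → μ({‖x‖ > r})` for all large `r`, `ψ` is continuous
`(a,b)`-bihomogeneous and `f ≥ 0` is continuous with support in an annulus,
then for each fixed `y ≠ 0`,
`∫ f(ψ(x,y)) μ_t(dx) → ∫ f(ψ(x,y)) μ(dx)` as `t → ∞`. -/
theorem stmt16 {dd d' m : ℕ}
    (f : EuclideanSpace ℝ (Fin m) → ℝ) (hf : Continuous f) (hfnn : ∀ z, 0 ≤ f z)
    (c M : ℝ) (hc : 0 < c)
    (hsupp : ∀ z, f z ≠ 0 → c⁻¹ ≤ ‖z‖ ∧ ‖z‖ ≤ c) (hfbdd : ∀ z, f z ≤ M)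
    (μt : ℝ → Measure (EuclideanSpace ℝ (Fin dd)))
    (μ : Measure (EuclideanSpace ℝ (Fin dd)))
    (hμRadon : ∀ r : ℝ, 0 < r → μ {x | ‖x‖ > r} ≠ ⊤)
    (hμtRadon : ∀ t : ℝ, ∀ r : ℝ, 0 < r → μt t {x | ‖x‖ > r} ≠ ⊤)
    (hvague : ∀ g : EuclideanSpace ℝ (Fin dd) → ℝ, Continuous g → (∀ x, 0 ≤ g x) →
      (∃ c' > (0:ℝ), ∀ x, g x ≠ 0 → c'⁻¹ ≤ ‖x‖ ∧ ‖x‖ ≤ c') →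
      Tendsto (fun t => ∫ x, g x ∂(μt t)) atTop (𝓝 (∫ x, g x ∂μ)))
    (hμtail : Tendsto (fun r : ℝ => (μ {x | ‖x‖ > r}).toReal) atTop (𝓝 0))
    (hμttail : ∃ r₀ : ℝ, ∀ r > r₀,
      Tendsto (fun t => (μt t {x | ‖x‖ > r}).toReal) atTop (𝓝 ((μ {x | ‖x‖ > r}).toReal)))
    (ψ : EuclideanSpace ℝ (Fin dd) × EuclideanSpace ℝ (Fin d') → EuclideanSpace ℝ (Fin m))
    (hψ : Continuous ψ)
    (a b : ℝ) (ha : 0 < a) (hb : 0 < b)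
    (hhom : ∀ s t : ℝ, 0 ≤ s → 0 ≤ t →
      ∀ (x : EuclideanSpace ℝ (Fin dd)) (y : EuclideanSpace ℝ (Fin d')),
        ψ (s • x, t • y) = (s ^ a * t ^ b) • ψ (x, y))
    (y : EuclideanSpace ℝ (Fin d')) (hy : y ≠ 0) :
    Tendsto (fun t => ∫ x, f (ψ (x, y)) ∂(μt t)) atTop
      (𝓝 (∫ x, f (ψ (x, y)) ∂μ)) :=
  stmt16_general f hf hfnn c M hc hsupp hfbdd μt μ hμRadon hμtRadon hvague hμtail hμttail ψ hψ a b
    ha hhom y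
end
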